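/- arXiv:1203.4591 — 3 statements merged into one kernel-verified Lean document; each statement's English description precedes it below -/
import Mathlib

section
/- Let f : [a,b] → ℝ be continuous on [a,b] and differentiable on (a,b), and suppose its derivative f' is bounded on (a,b), i.e. ‖f'‖_∞ = sup_{t ∈ (a,b)} |f'(t)| < ∞. Then for every x ∈ [a,b], |f(x) - (1/(b-a)) ∫_a^b f(u) du| ≤ (b-a) [1/4 + (x - (a+b)/2)² / (b-a)²] ‖f'‖_∞. -/
/-!
By the mean value theorem `|f x - f u| ≤ M |u - x|` on `[a,b]`. Averaging over `u` bounds
the deviation of `f x` from the mean of `f` by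
`M/(b-a) ∫_a^b |u - x| du = M ((x-a)² + (b-x)²) / (2(b-a))`,
which is the stated right-hand side.
-/

open MeasureTheory intervalIntegral Set

theorem Convex.abs_image_sub_le_of_abs_deriv_le {D : Set ℝ} (hD : Convex ℝ D) {f : ℝ → ℝ}
    (hf : ContinuousOn f D) (hf' : DifferentiableOn ℝ f (interior D)) {C : ℝ}
    (hC : ∀ t ∈ interior D, |deriv f t| ≤ C) {x y : ℝ} (hx : x ∈ D) (hy : y ∈ D) :
    |f y - f x| ≤ C * |y - x| := by
  wlog hxy : x ≤ y generalizing x y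
  · rw [abs_sub_comm, abs_sub_comm y]
    exact this hy hx (le_of_not_ge hxy)
  rw [abs_of_nonneg (sub_nonneg.2 hxy), abs_le, ← neg_mul]
  exact ⟨hD.mul_sub_le_image_sub_of_le_deriv hf hf' (fun t ht ↦ (abs_le.1 (hC t ht)).1)
      x hx y hy hxy,
    hD.image_sub_le_mul_sub_of_deriv_le hf hf' (fun t ht ↦ (abs_le.1 (hC t ht)).2)
      x hx y hy hxy⟩

theorem integral_abs_sub_of_mem_Icc {a b x : ℝ} (hx : x ∈ Icc a b) :
    ∫ u in a..b, |u - x| = ((x - a) ^ 2 + (b - x) ^ 2) / 2 := by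
  have hleft : ∫ u in a..x, |u - x| = (x - a) ^ 2 / 2 := by
    rw [integral_comp_sub_right (fun t ↦ |t|), sub_self]
    have : EqOn (fun t : ℝ ↦ |t|) (fun t ↦ -t) (uIcc (a - x) 0) := fun t ht ↦ by
      rw [uIcc_of_le (by linarith [hx.1])] at ht
      exact abs_of_nonpos ht.2
    rw [integral_congr this, intervalIntegral.integral_neg, integral_id]
    ring
  have hright : ∫ u in x..b, |u - x| = (b - x) ^ 2 / 2 := by
    rw [integral_comp_sub_right (fun t ↦ |t|), sub_self]
    have : EqOn (fun t : ℝ ↦ |t|) (fun t ↦ t) (uIcc 0 (b - x)) := fun t ht ↦ by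
      rw [uIcc_of_le (by linarith [hx.2])] at ht
      exact abs_of_nonneg ht.1
    rw [integral_congr this, integral_id]
    ring
  have hint : ∀ c d : ℝ, IntervalIntegrable (fun u ↦ |u - x|) volume c d := fun c d ↦
    (continuous_abs.comp (continuous_sub_right x)).intervalIntegrable c d
  rw [← integral_add_adjacent_intervals (hint a x) (hint x b), hleft, hright]
  ring

theorem abs_sub_average_le_average {a b c : ℝ} {f g : ℝ → ℝ} (hab : a < b)
    (hf : IntervalIntegrable f volume a b) (hg : IntervalIntegrable g volume a b)
    (h : ∀ u ∈ Icc a b, |c - f u| ≤ g u) :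
    |c - (1 / (b - a)) * ∫ u in a..b, f u| ≤ (1 / (b - a)) * ∫ u in a..b, g u := by
  have hba : 0 < b - a := sub_pos.2 hab
  have hsub : c - (1 / (b - a)) * ∫ u in a..b, f u
      = (1 / (b - a)) * ∫ u in a..b, (c - f u) := by
    rw [integral_sub intervalIntegrable_const hf, intervalIntegral.integral_const, smul_eq_mul]
    field_simp
  rw [hsub, abs_mul, abs_of_pos (one_div_pos.2 hba)]
  gcongr
  exact intervalIntegral.norm_integral_le_of_norm_le (f := fun u ↦ c - f u) hab.le
    (Filter.Eventually.of_forall fun u hu ↦ h u (Ioc_subset_Icc_self hu)) hg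

/-- **Classical Ostrowski inequality.** If `f` is continuous on `[a,b]`, differentiable
on `(a,b)`, and its derivative is bounded on `(a,b)` by `M`, then for every `x ∈ [a,b]`,
`|f(x) - (1/(b-a)) ∫_a^b f(u) du| ≤ (b-a) [1/4 + (x-(a+b)/2)²/(b-a)²] M`. -/
theorem ostrowski_classical (a b : ℝ) (hab : a < b) (f : ℝ → ℝ)
    (hc : ContinuousOn f (Set.Icc a b))
    (hd : ∀ t ∈ Set.Ioo a b, DifferentiableAt ℝ f t)
    (M : ℝ) (hM : ∀ t ∈ Set.Ioo a b, |deriv f t| ≤ M)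
    (x : ℝ) (hx : x ∈ Set.Icc a b) :
    |f x - (1 / (b - a)) * ∫ u in a..b, f u|
      ≤ (b - a) * (1 / 4 + (x - (a + b) / 2) ^ 2 / (b - a) ^ 2) * M := by
  have hfi : IntervalIntegrable f volume a b :=
    (hc.mono (uIcc_of_le hab.le).subset).intervalIntegrable
  have hlip : ∀ u ∈ Icc a b, |f x - f u| ≤ M * |u - x| := fun u hu ↦ by
    rw [abs_sub_comm]
    refine (convex_Icc a b).abs_image_sub_le_of_abs_deriv_le hc ?_ ?_ hx hu <;>
      rw [interior_Icc]
    exacts [fun t ht ↦ (hd t ht).differentiableWithinAt, hM]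
  have hbound : IntervalIntegrable (fun u ↦ M * |u - x|) volume a b := by
    apply Continuous.intervalIntegrable; fun_prop
  calc |f x - (1 / (b - a)) * ∫ u in a..b, f u|
      ≤ (1 / (b - a)) * ∫ u in a..b, M * |u - x| :=
        abs_sub_average_le_average hab hfi hbound hlip
    _ = (b - a) * (1 / 4 + (x - (a + b) / 2) ^ 2 / (b - a) ^ 2) * M := by
      rw [intervalIntegral.integral_const_mul, integral_abs_sub_of_mem_Icc hx]
      field_simp [(sub_pos.2 hab).ne']
      ring
end

section
/- Let n ∈ ℕ, let f be (n+1)-times continuously differentiable on [a,b], let x ∈ [a,b] be fixed, and assume f^{(k)}(x) = 0 for k = 1, ..., n. Then |f(x) - (1/(b-a)) ∫_a^b f(u) du| ≤ (‖f^{(n+1)}‖_∞ / (n+2)!) · [((x-a)^{n+2} + (b-x)^{n+2}) / (b-a)], where ‖f^{(n+1)}‖_∞ = sup_{t ∈ [a,b]} |f^{(n+1)}(t)|. -/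
open MeasureTheory intervalIntegral Set
open scoped Interval

/-! If the first `n` derivatives of `f` vanish at `x`, integrating the bound
`|f⁽ⁿ⁺¹⁾| ≤ M` `n + 1` times from `x` gives
`|f u - f x| ≤ M |u - x| ^ (n + 1) / (n + 1)!` on `[a, b]`.
Averaging over `u ∈ [a, b]` and using
`∫ u in a..b, |u - x| ^ (n + 1) = ((x - a) ^ (n + 2) + (b - x) ^ (n + 2)) / (n + 2)`
gives the inequality. -/

theorem abs_sub_le_of_abs_derivWithin_le_mul_pow {f : ℝ → ℝ} {a b x u C : ℝ} {p : ℕ}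
    (hab : a < b) (hf : ContDiffOn ℝ 1 f (Icc a b)) (hx : x ∈ Icc a b) (hu : u ∈ Icc a b)
    (hbound : ∀ t ∈ Icc a b, |derivWithin f (Icc a b) t| ≤ C * |t - x| ^ p) :
    |f u - f x| ≤ C * (|u - x| ^ (p + 1) / (p + 1)) := by
  have hsub : uIcc x u ⊆ Icc a b := uIcc_subset_Icc hx hu
  have hf' : ContinuousOn (derivWithin f (Icc a b)) (Icc a b) :=
    hf.continuousOn_derivWithin (uniqueDiffOn_Icc hab) le_rfl
  have hftc : ∫ t in x..u, derivWithin f (Icc a b) t = f u - f x := by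
    refine integral_eq_sub_of_hasDeriv_right (hf.continuousOn.mono hsub) (fun t ht => ?_)
      (hf'.mono hsub).intervalIntegrable
    have ht' : t ∈ Ioo a b := by
      rw [← interior_Icc]
      exact interior_mono hsub (by rwa [uIcc, interior_Icc])
    have hdiff := hf.differentiableOn one_ne_zero t (Ioo_subset_Icc_self ht')
    exact (hdiff.hasDerivWithinAt.hasDerivAt (Icc_mem_nhds ht'.1 ht'.2)).hasDerivWithinAt
  calc |f u - f x| = |∫ t in x..u, derivWithin f (Icc a b) t| := by rw [hftc]
    _ ≤ ∫ t in Ι x u, |derivWithin f (Icc a b) t| := by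
      simpa only [Real.norm_eq_abs] using
        norm_integral_le_integral_norm_uIoc (f := derivWithin f (Icc a b))
    _ ≤ ∫ t in Ι x u, C * |t - x| ^ p := by
      refine setIntegral_mono_on ?_ ?_ measurableSet_uIoc
        fun t ht => hbound t (hsub (Ioc_subset_Icc_self ht))
      · exact ((hf'.mono hsub).abs.integrableOn_uIcc).mono_set Ioc_subset_Icc_self
      · exact Continuous.integrableOn_uIoc (by fun_prop)
    _ = C * (|u - x| ^ (p + 1) / (p + 1)) := by
      rw [MeasureTheory.integral_const_mul, integral_pow_abs_sub_uIoc]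

theorem abs_sub_le_of_iteratedDerivWithin_eq_zero {a b x u M : ℝ} (hab : a < b)
    (hx : x ∈ Icc a b) (hu : u ∈ Icc a b) (m : ℕ) {f : ℝ → ℝ}
    (hf : ContDiffOn ℝ (m + 1 : ℕ) f (Icc a b))
    (hder : ∀ k : ℕ, 1 ≤ k → k ≤ m → iteratedDerivWithin k f (Icc a b) x = 0)
    (hM : ∀ t ∈ Icc a b, |iteratedDerivWithin (m + 1) f (Icc a b) t| ≤ M) :
    |f u - f x| ≤ M / (m + 1).factorial * |u - x| ^ (m + 1) := by
  induction m generalizing f u with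
  | zero =>
    have h := abs_sub_le_of_abs_derivWithin_le_mul_pow (p := 0) hab hf hx hu fun t ht => by
      simpa using hM t ht
    simpa using h
  | succ m ih =>
    set g := derivWithin f (Icc a b)
    have hg_iter (k : ℕ) : iteratedDerivWithin k g (Icc a b) =
        iteratedDerivWithin (k + 1) f (Icc a b) := iteratedDerivWithin_succ'.symm
    have hg : ContDiffOn ℝ (m + 1 : ℕ) g (Icc a b) :=
      hf.derivWithin (uniqueDiffOn_Icc hab) (by norm_cast)
    have hgx : g x = 0 := by simpa using hder 1 le_rfl (by omega)
    have hg_der (k : ℕ) (hk : 1 ≤ k) (hkm : k ≤ m) :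
        iteratedDerivWithin k g (Icc a b) x = 0 := by
      rw [hg_iter]
      exact hder (k + 1) (by omega) (by omega)
    have hg_bound (t : ℝ) (ht : t ∈ Icc a b) := ih ht hg hg_der fun s hs => by
      rw [hg_iter]; exact hM s hs
    refine (abs_sub_le_of_abs_derivWithin_le_mul_pow hab (hf.of_le (by norm_cast; omega)) hx hu
      fun t ht => by simpa [hgx] using hg_bound t ht).trans_eq ?_
    rw [Nat.factorial_succ (m + 1)]
    push_cast
    field_simp

theorem integral_pow_abs_sub_of_mem_Icc {a b x : ℝ} (hx : x ∈ Icc a b) (p : ℕ) :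
    ∫ u in a..b, |u - x| ^ p = ((x - a) ^ (p + 1) + (b - x) ^ (p + 1)) / (p + 1) := by
  have hint (c d : ℝ) : IntervalIntegrable (fun u => |u - x| ^ p) volume c d :=
    Continuous.intervalIntegrable (by fun_prop) c d
  rw [← integral_add_adjacent_intervals (hint a x) (hint x b), integral_of_le hx.1,
    integral_of_le hx.2, ← uIoc_of_ge hx.1, ← uIoc_of_le hx.2, integral_pow_abs_sub_uIoc,
    integral_pow_abs_sub_uIoc, abs_sub_comm, abs_of_nonneg (sub_nonneg.2 hx.1),
    abs_of_nonneg (sub_nonneg.2 hx.2), add_div]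

/-- **Anastassiou's higher-order Ostrowski inequality.** If `f ∈ C^{n+1}([a,b])`,
`x ∈ [a,b]` is fixed with `f⁽ᵏ⁾(x) = 0` for `k = 1, …, n`, and `M` bounds
`|f⁽ⁿ⁺¹⁾|` on `[a,b]`, then
`|f(x) - (1/(b-a)) ∫_a^b f(u) du| ≤ (M/(n+2)!) ((x-a)^{n+2} + (b-x)^{n+2})/(b-a)`. -/
theorem ostrowski_higher_order (n : ℕ) (a b : ℝ) (hab : a < b) (f : ℝ → ℝ)
    (hf : ContDiffOn ℝ (n + 1 : ℕ) f (Set.Icc a b))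
    (x : ℝ) (hx : x ∈ Set.Icc a b)
    (hder : ∀ k : ℕ, 1 ≤ k → k ≤ n → iteratedDerivWithin k f (Set.Icc a b) x = 0)
    (M : ℝ) (hM : ∀ t ∈ Set.Icc a b, |iteratedDerivWithin (n + 1) f (Set.Icc a b) t| ≤ M) :
    |f x - (1 / (b - a)) * ∫ u in a..b, f u|
      ≤ M / (Nat.factorial (n + 2)) * (((x - a) ^ (n + 2) + (b - x) ^ (n + 2)) / (b - a)) := by
  have hba : 0 < b - a := sub_pos.2 hab
  have hfi : IntervalIntegrable f volume a b :=
    (hf.continuousOn.mono (uIcc_of_le hab.le).subset).intervalIntegrable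
  calc |f x - (1 / (b - a)) * ∫ u in a..b, f u|
      = |∫ u in a..b, (f u - f x)| / (b - a) := by
        have h : f x - (1 / (b - a)) * ∫ u in a..b, f u
            = -((∫ u in a..b, (f u - f x)) / (b - a)) := by
          rw [integral_sub hfi intervalIntegrable_const, intervalIntegral.integral_const,
            smul_eq_mul]
          field_simp
          ring
        rw [h, abs_neg, abs_div, abs_of_pos hba]
    _ ≤ (∫ u in a..b, M / (n + 1).factorial * |u - x| ^ (n + 1)) / (b - a) := by
      gcongr
      refine norm_integral_le_of_norm_le (f := fun u => f u - f x) hab.le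
        (ae_of_all _ fun u hu => ?_) (Continuous.intervalIntegrable (by fun_prop) _ _)
      exact abs_sub_le_of_iteratedDerivWithin_eq_zero hab hx (Ioc_subset_Icc_self hu) n hf hder hM
    _ = _ := by
      rw [intervalIntegral.integral_const_mul, integral_pow_abs_sub_of_mem_Icc hx,
        Nat.factorial_succ (n + 1)]
      push_cast
      field_simp
end

section
/- Let α > 0, m = ⌈α⌉, and suppose f : [a,b] → ℝ is such that f^{(m-1)} is absolutely continuous on [a,b]. Then for every x ∈ [a,b], f(x) = Σ_{k=0}^{m-1} (f^{(k)}(b)/k!) (x-b)^k + (1/Γ(α)) ∫_x^b (t-x)^{α-1} D_{b-}^α f(t) dt. -/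
open MeasureTheory intervalIntegral

/-- `f ∈ AC^m([a,b])`: `f` is `(m-1)`-times continuously differentiable on `[a,b]` and
`f^{(m-1)}` is absolutely continuous on `[a,b]`, i.e. `f^{(m-1)}` is recovered by
integrating its (a.e.) derivative `f^{(m)}`, which is integrable on `[a,b]`. -/
def IsACDeriv (m : ℕ) (a b : ℝ) (f : ℝ → ℝ) : Prop :=
  ContDiffOn ℝ (m - 1 : ℕ) f (Set.Icc a b) ∧
  IntervalIntegrable (iteratedDerivWithin m f (Set.Icc a b)) MeasureTheory.volume a b ∧
  ∀ x ∈ Set.Icc a b,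
    iteratedDerivWithin (m - 1) f (Set.Icc a b) x
      = iteratedDerivWithin (m - 1) f (Set.Icc a b) a
        + ∫ t in a..x, iteratedDerivWithin m f (Set.Icc a b) t

/-- The right Caputo fractional derivative `D_{b-}^α f` of order `α > 0` of `f` on `[a,b]`:
with `m = ⌈α⌉`, it is `((-1)^m / Γ(m-α)) ∫_x^b (t-x)^{m-α-1} f^{(m)}(t) dt` when `α ∉ ℕ`,
and `(-1)^m f^{(m)}(x)` when `α = m ∈ ℕ`. -/
noncomputable def rightCaputoDeriv (α a b : ℝ) (f : ℝ → ℝ) (x : ℝ) : ℝ :=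
  if α = (⌈α⌉₊ : ℝ) then
    (-1 : ℝ) ^ (⌈α⌉₊ : ℕ) * iteratedDerivWithin ⌈α⌉₊ f (Set.Icc a b) x
  else
    ((-1 : ℝ) ^ (⌈α⌉₊ : ℕ) / Real.Gamma ((⌈α⌉₊ : ℝ) - α)) *
      ∫ t in x..b, (t - x) ^ ((⌈α⌉₊ : ℝ) - α - 1) * iteratedDerivWithin ⌈α⌉₊ f (Set.Icc a b) t

/-!
Write `I^p` for the right Riemann–Liouville integral on `[x, b]` and `m = ⌈α⌉`. Writing
`f^{(k)} = f^{(k)}(b) - I^1 f^{(k+1)}` and integrating by parts in the form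
`I^p (c - I^1 g) = c (b - x)^p / Γ(p + 1) - I^{p+1} g` gives the classical Taylor formula
`f = Σ_{k<m} f^{(k)}(b) (x - b)^k / k! + (-1)^m I^m f^{(m)}`, the last step using the absolute
continuity of `f^{(m-1)}`. Since `D_{b-}^α f = (-1)^m I^{m-α} f^{(m)}`, the remainder
`I^α D_{b-}^α f` equals `(-1)^m I^m f^{(m)}` by the semigroup law `I^p I^q = I^{p+q}`, which is
Fubini on the triangle `x < t < s ≤ b` combined with the Beta integral.
-/

open Set Real

lemma integral_rpow_mul_sub_rpow {p q a : ℝ} (hp : 0 < p) (hq : 0 < q) (ha : 0 < a) :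
    ∫ u in (0 : ℝ)..a, u ^ (p - 1) * (a - u) ^ (q - 1) =
      a ^ (p + q - 1) * ProbabilityTheory.beta p q := by
  have h := Complex.betaIntegral_scaled p q ha
  rw [Complex.betaIntegral_eq_Gamma_mul_div _ _ (by simpa) (by simpa), ← Complex.ofReal_add,
    Complex.Gamma_ofReal, Complex.Gamma_ofReal, Complex.Gamma_ofReal] at h
  apply Complex.ofReal_injective
  rw [← intervalIntegral.integral_ofReal, intervalIntegral.integral_congr (g := fun u : ℝ =>
    (u : ℂ) ^ ((p : ℂ) - 1) * ((a : ℂ) - u) ^ ((q : ℂ) - 1)), h]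
  · push_cast [ProbabilityTheory.beta, Complex.ofReal_cpow ha.le]
    rfl
  · intro u hu
    rw [uIcc_of_le ha.le] at hu
    push_cast [Complex.ofReal_cpow hu.1, Complex.ofReal_cpow (sub_nonneg.2 hu.2)]
    rfl

lemma integral_sub_rpow_mul_sub_rpow {p q x s : ℝ} (hp : 0 < p) (hq : 0 < q) (hxs : x < s) :
    ∫ t in x..s, (t - x) ^ (p - 1) * (s - t) ^ (q - 1) =
      (s - x) ^ (p + q - 1) * ProbabilityTheory.beta p q := by
  have h := intervalIntegral.integral_comp_sub_right
    (fun u => u ^ (p - 1) * ((s - x) - u) ^ (q - 1)) x (a := x) (b := s)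
  simp only [sub_sub_sub_cancel_right, sub_self] at h
  rw [h, integral_rpow_mul_sub_rpow hp hq (sub_pos.2 hxs)]

lemma intervalIntegrable_sub_rpow_mul {p x c : ℝ} (hp : 0 < p) {h : ℝ → ℝ}
    (hh : ContinuousOn h (uIcc x c)) :
    IntervalIntegrable (fun t => (t - x) ^ (p - 1) * h t) volume x c := by
  have := (intervalIntegral.intervalIntegrable_rpow' (a := 0) (b := c - x)
    (by linarith : -1 < p - 1)).comp_sub_right x
  simp only [zero_add, sub_add_cancel] at this
  exact this.mul_continuousOn hh

lemma intervalIntegrable_mul_sub_rpow {q c s : ℝ} (hq : 0 < q) {h : ℝ → ℝ}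
    (hh : ContinuousOn h (uIcc c s)) :
    IntervalIntegrable (fun t => h t * (s - t) ^ (q - 1)) volume c s := by
  have := (intervalIntegral.intervalIntegrable_rpow' (a := 0) (b := s - c)
    (by linarith : -1 < q - 1)).comp_sub_left s
  simp only [sub_zero, sub_sub_cancel] at this
  exact this.symm.continuousOn_mul hh

lemma intervalIntegrable_sub_rpow_mul_sub_rpow {p q x s : ℝ} (hp : 0 < p) (hq : 0 < q)
    (hxs : x ≤ s) :
    IntervalIntegrable (fun t => (t - x) ^ (p - 1) * (s - t) ^ (q - 1)) volume x s := by
  rcases hxs.eq_or_lt with rfl | hxs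
  · exact IntervalIntegrable.refl
  have hxc : x < (x + s) / 2 := by linarith
  have hcs : (x + s) / 2 < s := by linarith
  refine IntervalIntegrable.trans (b := (x + s) / 2) ?_ ?_
  · refine intervalIntegrable_sub_rpow_mul hp (ContinuousOn.rpow_const (by fun_prop) ?_)
    rw [uIcc_of_le hxc.le]
    exact fun t ht => Or.inl (by linarith [ht.2])
  · refine intervalIntegrable_mul_sub_rpow hq (ContinuousOn.rpow_const (by fun_prop) ?_)
    rw [uIcc_of_le hcs.le]
    exact fun t ht => Or.inl (by linarith [ht.1])

lemma indicator_setOf_lt_apply {M : Type*} [Zero M] (G : ℝ × ℝ → M) (t s : ℝ) :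
    {z : ℝ × ℝ | z.1 < z.2}.indicator G (t, s) = (Iio s).indicator (fun t => G (t, s)) t := by
  by_cases h : t < s <;> simp [h]

section Triangle

variable {E : Type*} [NormedAddCommGroup E] [NormedSpace ℝ E] {x b : ℝ}

lemma setIntegral_indicator_lt_left (G : ℝ × ℝ → E) {s : ℝ} (hs : s ∈ Ioc x b) :
    ∫ t in Ioc x b, {z : ℝ × ℝ | z.1 < z.2}.indicator G (t, s) = ∫ t in x..s, G (t, s) := by
  have hinter : Ioc x b ∩ Iio s = Ioo x s := by
    ext t
    simp only [mem_inter_iff, mem_Ioc, mem_Iio, mem_Ioo]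
    exact ⟨fun h => ⟨h.1.1, h.2⟩, fun h => ⟨⟨h.1, h.2.le.trans hs.2⟩, h.2⟩⟩
  simp_rw [indicator_setOf_lt_apply G _ s]
  rw [setIntegral_indicator measurableSet_Iio, hinter, intervalIntegral.integral_of_le hs.1.le,
    integral_Ioc_eq_integral_Ioo]

lemma setIntegral_indicator_lt_right (G : ℝ × ℝ → E) {t : ℝ} (ht : t ∈ Ioc x b) :
    ∫ s in Ioc x b, {z : ℝ × ℝ | z.1 < z.2}.indicator G (t, s) = ∫ s in t..b, G (t, s) := by
  have hsection : ∀ s, {z : ℝ × ℝ | z.1 < z.2}.indicator G (t, s) =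
      (Ioi t).indicator (fun s => G (t, s)) s := fun s => by
    by_cases h : t < s <;> simp [h]
  simp_rw [hsection]
  rw [setIntegral_indicator measurableSet_Ioi, Ioc_inter_Ioi, sup_eq_right.2 ht.1.le,
    intervalIntegral.integral_of_le ht.2]

theorem integral_integral_swap_of_lt (hxb : x ≤ b) {G : ℝ × ℝ → E}
    (hG : Integrable ({z : ℝ × ℝ | z.1 < z.2}.indicator G)
      ((volume.restrict (Ioc x b)).prod (volume.restrict (Ioc x b)))) :
    ∫ t in x..b, ∫ s in t..b, G (t, s) = ∫ s in x..b, ∫ t in x..s, G (t, s) := by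
  rw [intervalIntegral.integral_of_le hxb, intervalIntegral.integral_of_le hxb]
  calc ∫ t in Ioc x b, ∫ s in t..b, G (t, s)
      = ∫ t in Ioc x b, ∫ s in Ioc x b, {z : ℝ × ℝ | z.1 < z.2}.indicator G (t, s) :=
        setIntegral_congr_fun measurableSet_Ioc fun t ht =>
          (setIntegral_indicator_lt_right G ht).symm
    _ = ∫ s in Ioc x b, ∫ t in Ioc x b, {z : ℝ × ℝ | z.1 < z.2}.indicator G (t, s) :=
        integral_integral_swap hG
    _ = ∫ s in Ioc x b, ∫ t in x..s, G (t, s) :=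
        setIntegral_congr_fun measurableSet_Ioc fun s hs => setIntegral_indicator_lt_left G hs

end Triangle

section Dirichlet

variable {p q x b : ℝ}

lemma integral_sub_rpow_mul_sub_rpow_mul_const (hp : 0 < p) (hq : 0 < q) {s : ℝ} (hxs : x < s)
    (c : ℝ) :
    ∫ t in x..s, (t - x) ^ (p - 1) * ((s - t) ^ (q - 1) * c) =
      (s - x) ^ (p + q - 1) * ProbabilityTheory.beta p q * c := by
  simp_rw [← mul_assoc]
  rw [intervalIntegral.integral_mul_const, integral_sub_rpow_mul_sub_rpow hp hq hxs]

lemma integrable_indicator_lt_sub_rpow_mul_sub_rpow_mul (hp : 0 < p) (hq : 0 < q)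
    (hpq : 1 ≤ p + q) (hxb : x ≤ b) {g : ℝ → ℝ} (hg : IntervalIntegrable g volume x b) :
    Integrable ({z : ℝ × ℝ | z.1 < z.2}.indicator
        fun z => (z.1 - x) ^ (p - 1) * ((z.2 - z.1) ^ (q - 1) * g z.2))
      ((volume.restrict (Ioc x b)).prod (volume.restrict (Ioc x b))) := by
  set G : ℝ × ℝ → ℝ := fun z => (z.1 - x) ^ (p - 1) * ((z.2 - z.1) ^ (q - 1) * g z.2)
  have hg' : IntegrableOn g (Ioc x b) := (intervalIntegrable_iff_integrableOn_Ioc_of_le hxb).1 hg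
  have hmeas : AEStronglyMeasurable ({z : ℝ × ℝ | z.1 < z.2}.indicator G)
      ((volume.restrict (Ioc x b)).prod (volume.restrict (Ioc x b))) := by
    refine AEStronglyMeasurable.indicator ?_ (measurableSet_lt measurable_fst measurable_snd)
    exact (by fun_prop : Measurable fun z : ℝ × ℝ => (z.1 - x) ^ (p - 1)).aestronglyMeasurable.mul
      ((by fun_prop : Measurable fun z : ℝ × ℝ => (z.2 - z.1) ^ (q - 1)).aestronglyMeasurable.mul
        hg'.aestronglyMeasurable.comp_snd)
  have hnorm : ∀ s ∈ Ioc x b, ∫ t in Ioc x b, ‖{z : ℝ × ℝ | z.1 < z.2}.indicator G (t, s)‖ =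
      (s - x) ^ (p + q - 1) * ProbabilityTheory.beta p q * ‖g s‖ := by
    intro s hs
    simp_rw [norm_indicator_eq_indicator_norm]
    rw [setIntegral_indicator_lt_left (fun z => ‖G z‖) hs,
      ← integral_sub_rpow_mul_sub_rpow_mul_const hp hq hs.1]
    refine intervalIntegral.integral_congr fun t ht => ?_
    rw [uIcc_of_le hs.1.le] at ht
    simp only [G, norm_mul, Real.norm_of_nonneg (rpow_nonneg (sub_nonneg.2 ht.1) _),
      Real.norm_of_nonneg (rpow_nonneg (sub_nonneg.2 ht.2) _)]
  rw [integrable_prod_iff' hmeas]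
  constructor
  · filter_upwards [ae_restrict_mem measurableSet_Ioc] with s hs
    rw [funext (indicator_setOf_lt_apply G · s), integrable_indicator_iff measurableSet_Iio,
      IntegrableOn, Measure.restrict_restrict measurableSet_Iio]
    have hsection := (intervalIntegrable_iff_integrableOn_Ioc_of_le hs.1.le).1
      ((intervalIntegrable_sub_rpow_mul_sub_rpow hp hq hs.1.le).mul_const (g s))
    simp only [mul_assoc] at hsection
    exact hsection.mono_set fun t ht => ⟨ht.2.1, ht.1.le⟩
  · have hcont : ContinuousOn (fun s => (s - x) ^ (p + q - 1) * ProbabilityTheory.beta p q)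
        (uIcc x b) :=
      ((continuous_sub_right x).rpow_const fun _ => Or.inr (by linarith)).continuousOn.mul
        continuousOn_const
    refine ((intervalIntegrable_iff_integrableOn_Ioc_of_le hxb).1
      (hg.norm.continuousOn_mul hcont)).congr ?_
    filter_upwards [ae_restrict_mem measurableSet_Ioc] with s hs
    exact (hnorm s hs).symm

theorem integral_sub_rpow_mul_integral_sub_rpow_mul (hp : 0 < p) (hq : 0 < q)
    (hpq : 1 ≤ p + q) (hxb : x ≤ b) {g : ℝ → ℝ} (hg : IntervalIntegrable g volume x b) :
    ∫ t in x..b, (t - x) ^ (p - 1) * ∫ s in t..b, (s - t) ^ (q - 1) * g s =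
      ProbabilityTheory.beta p q * ∫ s in x..b, (s - x) ^ (p + q - 1) * g s := by
  simp_rw [← intervalIntegral.integral_const_mul]
  rw [integral_integral_swap_of_lt
    (G := fun z => (z.1 - x) ^ (p - 1) * ((z.2 - z.1) ^ (q - 1) * g z.2)) hxb
    (integrable_indicator_lt_sub_rpow_mul_sub_rpow_mul hp hq hpq hxb hg),
    intervalIntegral.integral_of_le hxb, intervalIntegral.integral_of_le hxb]
  refine setIntegral_congr_fun measurableSet_Ioc fun s hs => ?_
  dsimp only
  rw [integral_sub_rpow_mul_sub_rpow_mul_const hp hq hs.1]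
  ring

end Dirichlet

/-- `I_{b-}^p g (x)`, the right Riemann–Liouville integral of order `p`. -/
noncomputable def rightRLIntegral (b p : ℝ) (g : ℝ → ℝ) (x : ℝ) : ℝ :=
  1 / Gamma p * ∫ t in x..b, (t - x) ^ (p - 1) * g t

section RightRLIntegral

variable {b p x : ℝ}

lemma rightRLIntegral_one (g : ℝ → ℝ) : rightRLIntegral b 1 g x = ∫ t in x..b, g t := by
  simp [rightRLIntegral]

lemma rightRLIntegral_const_mul (c : ℝ) (g : ℝ → ℝ) :
    rightRLIntegral b p (fun t => c * g t) x = c * rightRLIntegral b p g x := by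
  simp only [rightRLIntegral, mul_left_comm _ c, intervalIntegral.integral_const_mul]

lemma rightRLIntegral_const (hp : 0 < p) (c : ℝ) :
    rightRLIntegral b p (fun _ => c) x = c * (b - x) ^ p / Gamma (p + 1) := by
  have hpow : ∫ t in x..b, (t - x) ^ (p - 1) = (b - x) ^ p / p := by
    rw [intervalIntegral.integral_comp_sub_right (fun u => u ^ (p - 1)),
      integral_rpow (Or.inl (by linarith)), sub_add_cancel, sub_self, zero_rpow hp.ne', sub_zero]
  rw [rightRLIntegral, intervalIntegral.integral_mul_const, hpow, Gamma_add_one hp.ne']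
  field_simp

lemma rightRLIntegral_congr {g₁ g₂ : ℝ → ℝ} (hxb : x ≤ b) (h : EqOn g₁ g₂ (Icc x b)) :
    rightRLIntegral b p g₁ x = rightRLIntegral b p g₂ x := by
  unfold rightRLIntegral
  congr 1
  refine intervalIntegral.integral_congr fun t ht => ?_
  rw [uIcc_of_le hxb] at ht
  simp only [h ht]

lemma rightRLIntegral_sub {g₁ g₂ : ℝ → ℝ}
    (h₁ : IntervalIntegrable (fun t => (t - x) ^ (p - 1) * g₁ t) volume x b)
    (h₂ : IntervalIntegrable (fun t => (t - x) ^ (p - 1) * g₂ t) volume x b) :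
    rightRLIntegral b p (fun t => g₁ t - g₂ t) x =
      rightRLIntegral b p g₁ x - rightRLIntegral b p g₂ x := by
  simp only [rightRLIntegral, mul_sub, intervalIntegral.integral_sub h₁ h₂]

theorem rightRLIntegral_add {q : ℝ} (hp : 0 < p) (hq : 0 < q) (hpq : 1 ≤ p + q) (hxb : x ≤ b)
    {g : ℝ → ℝ} (hg : IntervalIntegrable g volume x b) :
    rightRLIntegral b p (rightRLIntegral b q g) x = rightRLIntegral b (p + q) g x := by
  simp only [rightRLIntegral, mul_left_comm _ (1 / Gamma q), intervalIntegral.integral_const_mul,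
    integral_sub_rpow_mul_integral_sub_rpow_mul hp hq hpq hxb hg, ProbabilityTheory.beta]
  have := (Gamma_pos_of_pos hp).ne'
  have := (Gamma_pos_of_pos hq).ne'
  have := (Gamma_pos_of_pos (add_pos hp hq)).ne'
  field_simp

theorem rightRLIntegral_eq_sub_rightRLIntegral_add_one (hp : 0 < p) (hxb : x ≤ b)
    {h h' : ℝ → ℝ} (hh' : IntervalIntegrable h' volume x b)
    (hh : ∀ s ∈ Icc x b, h s = h b - ∫ u in s..b, h' u) :
    rightRLIntegral b p h x =
      h b * (b - x) ^ p / Gamma (p + 1) - rightRLIntegral b (p + 1) h' x := by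
  have hprim : ContinuousOn (fun s => ∫ u in s..b, h' u) (uIcc x b) :=
    intervalIntegral.continuousOn_primitive_interval_left
      ((intervalIntegrable_iff' (f := h')).1 hh')
  rw [rightRLIntegral_congr hxb hh, rightRLIntegral_sub
      (intervalIntegrable_sub_rpow_mul hp continuousOn_const)
      (intervalIntegrable_sub_rpow_mul hp hprim),
    rightRLIntegral_const hp, ← rightRLIntegral_add hp one_pos (by linarith) hxb hh']
  congr 2
  exact funext fun s => (rightRLIntegral_one h').symm

end RightRLIntegral

section Taylor

variable {a b : ℝ} {f : ℝ → ℝ}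

lemma ContDiffOn.integral_iteratedDerivWithin_succ {n : ℕ} (hf : ContDiffOn ℝ n f (Icc a b))
    (hab : a < b) {k : ℕ} (hk : k < n) {s : ℝ} (hs : s ∈ Icc a b) :
    ∫ u in s..b, iteratedDerivWithin (k + 1) f (Icc a b) u =
      iteratedDerivWithin k f (Icc a b) b - iteratedDerivWithin k f (Icc a b) s := by
  have hud := uniqueDiffOn_Icc hab
  have hsub : Icc s b ⊆ Icc a b := Icc_subset_Icc_left hs.1
  refine intervalIntegral.integral_eq_sub_of_hasDeriv_right_of_le hs.2
    ((hf.continuousOn_iteratedDerivWithin (by exact_mod_cast hk.le) hud).mono hsub)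
    (fun u hu => ?_) ?_
  · have hu' : u ∈ Ioo a b := ⟨hs.1.trans_lt hu.1, hu.2⟩
    rw [iteratedDerivWithin_succ]
    exact ((hf.differentiableOn_iteratedDerivWithin (by exact_mod_cast hk) hud u
      (Ioo_subset_Icc_self hu')).hasDerivWithinAt.hasDerivAt
        (Icc_mem_nhds hu'.1 hu'.2)).hasDerivWithinAt
  · refine ContinuousOn.intervalIntegrable ?_
    rw [uIcc_of_le hs.2]
    exact (hf.continuousOn_iteratedDerivWithin (by exact_mod_cast hk) hud).mono hsub

variable {m : ℕ}

lemma IsACDeriv.intervalIntegrable_iteratedDerivWithin (hf : IsACDeriv m a b f) (hab : a < b)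
    {k : ℕ} (hk : k ≤ m) {x : ℝ} (hx : x ∈ Icc a b) :
    IntervalIntegrable (iteratedDerivWithin k f (Icc a b)) volume x b := by
  have hsub : uIcc x b ⊆ Icc a b := by
    rw [uIcc_of_le hx.2]
    exact Icc_subset_Icc_left hx.1
  rcases hk.lt_or_eq with hk | rfl
  · exact ((hf.1.continuousOn_iteratedDerivWithin (by exact_mod_cast Nat.le_sub_one_of_lt hk)
      (uniqueDiffOn_Icc hab)).mono hsub).intervalIntegrable
  · exact hf.2.1.mono_set (by rwa [uIcc_of_le hab.le])

lemma IsACDeriv.iteratedDerivWithin_eq_sub_integral (hf : IsACDeriv m a b f) (hab : a < b)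
    {k : ℕ} (hk : k < m) {s : ℝ} (hs : s ∈ Icc a b) :
    iteratedDerivWithin k f (Icc a b) s =
      iteratedDerivWithin k f (Icc a b) b -
        ∫ u in s..b, iteratedDerivWithin (k + 1) f (Icc a b) u := by
  obtain ⟨hcd, hint, hac⟩ := hf
  rcases Nat.lt_or_ge (k + 1) m with hk' | hk'
  · rw [hcd.integral_iteratedDerivWithin_succ hab (by omega) hs]
    ring
  · obtain rfl : k = m - 1 := by omega
    rw [Nat.sub_add_cancel (by omega), ← intervalIntegral.integral_interval_sub_left hint
      (hint.mono_set (by rw [uIcc_of_le hs.1, uIcc_of_le hab.le]; exact Icc_subset_Icc_right hs.2)),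
      hac b ⟨hab.le, le_rfl⟩, hac s hs]
    ring

theorem IsACDeriv.taylor (hf : IsACDeriv m a b f) (hab : a < b) (hm : 0 < m) {x : ℝ}
    (hx : x ∈ Icc a b) :
    f x = ∑ k ∈ Finset.range m, iteratedDerivWithin k f (Icc a b) b / k.factorial * (x - b) ^ k +
      (-1) ^ m * rightRLIntegral b m (iteratedDerivWithin m f (Icc a b)) x := by
  suffices h : ∀ k < m, f x = ∑ i ∈ Finset.range (k + 1),
      iteratedDerivWithin i f (Icc a b) b / i.factorial * (x - b) ^ i +
        (-1) ^ (k + 1) *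
          rightRLIntegral b (k + 1 : ℕ) (iteratedDerivWithin (k + 1) f (Icc a b)) x by
    obtain ⟨k, rfl⟩ := Nat.exists_eq_add_of_lt hm
    simpa using h k (by omega)
  intro k
  induction k with
  | zero =>
    intro h0
    have hfx := hf.iteratedDerivWithin_eq_sub_integral hab h0 hx
    rw [iteratedDerivWithin_zero] at hfx
    rw [hfx, Finset.sum_range_one, zero_add, Nat.cast_one, rightRLIntegral_one]
    simp [sub_eq_add_neg]
  | succ k ih =>
    intro hk
    rw [ih (by omega), Finset.sum_range_succ _ (k + 1),
      rightRLIntegral_eq_sub_rightRLIntegral_add_one (by positivity) hx.2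
        (hf.intervalIntegrable_iteratedDerivWithin hab hk hx)
        (fun s hs => hf.iteratedDerivWithin_eq_sub_integral hab hk
          (Icc_subset_Icc_left hx.1 hs)),
      rpow_natCast, Gamma_nat_eq_factorial, Nat.succ_eq_add_one, show ((k + 1 : ℕ) : ℝ) + 1 = (k + 1 + 1 : ℕ) by push_cast; ring,
      show (x - b) ^ (k + 1) = (-1) ^ (k + 1) * (b - x) ^ (k + 1) by rw [← mul_pow]; ring]
    ring

end Taylor

section Caputo

variable {α a b : ℝ} {f : ℝ → ℝ}

lemma rightCaputoDeriv_of_eq_ceil (h : α = ⌈α⌉₊) :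
    rightCaputoDeriv α a b f = fun t => (-1) ^ ⌈α⌉₊ * iteratedDerivWithin ⌈α⌉₊ f (Icc a b) t :=
  funext fun _ => if_pos h

lemma rightCaputoDeriv_of_ne_ceil (h : α ≠ ⌈α⌉₊) :
    rightCaputoDeriv α a b f = fun t =>
      (-1) ^ ⌈α⌉₊ * rightRLIntegral b (⌈α⌉₊ - α) (iteratedDerivWithin ⌈α⌉₊ f (Icc a b)) t := by
  funext t
  rw [rightCaputoDeriv, if_neg h, rightRLIntegral]
  ring

theorem rightRLIntegral_rightCaputoDeriv (hα : 0 < α) (hab : a < b) (hf : IsACDeriv ⌈α⌉₊ a b f)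
    {x : ℝ} (hx : x ∈ Icc a b) :
    rightRLIntegral b α (rightCaputoDeriv α a b f) x =
      (-1) ^ ⌈α⌉₊ * rightRLIntegral b ⌈α⌉₊ (iteratedDerivWithin ⌈α⌉₊ f (Icc a b)) x := by
  by_cases h : α = ⌈α⌉₊
  · rw [rightCaputoDeriv_of_eq_ceil h, rightRLIntegral_const_mul, ← h]
  · have hm : (1 : ℝ) ≤ ⌈α⌉₊ := by exact_mod_cast Nat.ceil_pos.2 hα
    rw [rightCaputoDeriv_of_ne_ceil h, rightRLIntegral_const_mul,
      rightRLIntegral_add hα (sub_pos.2 ((Nat.le_ceil α).lt_of_ne h)) (by linarith) hx.2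
        (hf.intervalIntegrable_iteratedDerivWithin hab le_rfl hx), add_sub_cancel]

end Caputo

/-- **Right Caputo fractional Taylor formula with integral remainder.** -/
theorem rightCaputo_taylor (α : ℝ) (hα : 0 < α) (a b : ℝ) (hab : a < b) (f : ℝ → ℝ)
    (hf : IsACDeriv ⌈α⌉₊ a b f) (x : ℝ) (hx : x ∈ Set.Icc a b) :
    f x = (∑ k ∈ Finset.range ⌈α⌉₊,
        iteratedDerivWithin k f (Set.Icc a b) b / (Nat.factorial k) * (x - b) ^ k)
      + (1 / Real.Gamma α) * ∫ t in x..b, (t - x) ^ (α - 1) * rightCaputoDeriv α a b f t := by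
  calc f x = _ := hf.taylor hab (Nat.ceil_pos.2 hα) hx
    _ = _ := by rw [← rightRLIntegral_rightCaputoDeriv hα hab hf hx]; rfl
end
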